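/- Let S be a completely 0-simple semigroup, presented as a regular Rees matrix semigroup M⁰(G; n, m; P) over a group G with n×m sandwich matrix P over G⁰. If Y is a subsemilattice of S, then |Y| ≤ √(|S| − 1) + 1, where |S| = |G|·n·m + 1. -/

import Mathlib

/-- A subsemilattice of a semigroup: a subsemigroup consisting of pairwise commuting
idempotents. -/
def IsSubsemilattice {S : Type} [Mul S] (Y : Set S) : Prop :=
  (∀ a ∈ Y, ∀ b ∈ Y, a * b ∈ Y) ∧ (∀ a ∈ Y, a * a = a) ∧
    (∀ a ∈ Y, ∀ b ∈ Y, a * b = b * a)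


/-- Carrier of the Rees matrix semigroup `M⁰(G; n, m; P)`: triples `(g; i, j)` together
with a zero (represented by `none`). -/
def ReesCarrier (G : Type) (n m : ℕ) : Type := Option (G × Fin n × Fin m)

/-- Multiplication of the Rees matrix semigroup `M⁰(G; n, m; P)` with sandwich matrix
`P : Fin m → Fin n → Option G` (entries in `G⁰`, with `none` playing the role of `0`):
`(g; i, j)(h; k, l) = (g P_{j,k} h; i, l)` if `P_{j,k} ≠ 0`, and `0` otherwise. -/
def reesMul {G : Type} [Group G] {n m : ℕ} (P : Fin m → Fin n → Option G) :
    ReesCarrier G n m → ReesCarrier G n m → ReesCarrier G n m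
  | some (g, i, j), some (h, k, l) =>
      match P j k with
      | some p => some (g * p * h, i, l)
      | none => none
  | _, _ => none

theorem reesMul_none_left {G : Type} [Group G] {n m : ℕ} (P : Fin m → Fin n → Option G)
    (x : ReesCarrier G n m) : reesMul P none x = none := by cases x <;> rfl

theorem reesMul_none_right {G : Type} [Group G] {n m : ℕ} (P : Fin m → Fin n → Option G)
    (x : ReesCarrier G n m) : reesMul P x none = none := by cases x <;> rfl

theorem reesMul_assoc {G : Type} [Group G] {n m : ℕ} (P : Fin m → Fin n → Option G)
    (x y z : ReesCarrier G n m) :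
    reesMul P (reesMul P x y) z = reesMul P x (reesMul P y z) := by
  have key : ∀ (g h : G) (i : Fin n) (j : Fin m) (k : Fin n) (l : Fin m),
      reesMul P (some (g, i, j)) (some (h, k, l)) = (P j k).map (fun p => (g * p * h, i, l)) := by
    intro g h i j k l
    show (match P j k with | some p => some (g * p * h, i, l) | none => none) = _
    cases P j k <;> rfl
  match x, y, z with
  | none, _, _ => rfl
  | some _, none, _ => rfl
  | some (g, i, j), some (h, k, l), none =>
    show reesMul P (reesMul P (some (g, i, j)) (some (h, k, l))) none = none
    exact reesMul_none_right P _
  | some (g, i, j), some (h, k, l), some (f, u, v) =>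
    rw [key, key]
    cases hp : P j k <;> cases hq : P l u <;>
      simp [hp, hq, key, mul_assoc] <;>
      first
        | rfl
        | exact reesMul_none_left P _
        | exact (reesMul_none_right P _).symm
        | exact (reesMul_none_left P _).trans (reesMul_none_right P _).symm

/-- The Rees matrix semigroup `M⁰(G; n, m; P)`. -/
def reesSemigroup {G : Type} [Group G] {n m : ℕ} (P : Fin m → Fin n → Option G) :
    Semigroup (ReesCarrier G n m) where
  mul := reesMul P
  mul_assoc := reesMul_assoc P

/-!
A nonzero idempotent `(g; i, j)` forces `P_{j,i} = g⁻¹`, in particular `P_{j,i} ≠ 0`. For distinct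
commuting nonzero idempotents `(g; i, j)` and `(h; k, l)` the two (equal) products lie in cells
`(i, l)` and `(k, j)`; they cannot be nonzero, since then both idempotents would sit in the same
cell and be equal. Hence `P_{j,k} = P_{l,i} = 0`, which excludes `i = k` and `j = l`. So the
nonzero elements of a subsemilattice lie in pairwise distinct rows and columns: there are at most
`min n m ≤ √(n m)` of them, and zero adds one more.
-/

section ReesMatrix

variable {G : Type} [Group G] {n m : ℕ} (P : Fin m → Fin n → Option G)

lemma reesMul_some_some (g h : G) (i k : Fin n) (j l : Fin m) :
    reesMul P (some (g, i, j)) (some (h, k, l)) = (P j k).map fun p => (g * p * h, i, l) := by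
  show (match P j k with | some p => some (g * p * h, i, l) | none => none) = _
  cases P j k <;> rfl

variable {P}

lemma sandwich_eq_inv_of_idempotent {g : G} {i : Fin n} {j : Fin m}
    (he : reesMul P (some (g, i, j)) (some (g, i, j)) = some (g, i, j)) :
    P j i = some g⁻¹ := by
  rw [reesMul_some_some] at he
  obtain ⟨p, hp, hgpg⟩ := Option.map_eq_some_iff.mp he
  have hgp : g * p = 1 := mul_right_cancel ((congrArg Prod.fst hgpg).trans (one_mul g).symm)
  rw [hp, eq_inv_of_mul_eq_one_right hgp]

lemma sandwich_eq_none_of_commute {g h : G} {i k : Fin n} {j l : Fin m}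
    (he : reesMul P (some (g, i, j)) (some (g, i, j)) = some (g, i, j))
    (hf : reesMul P (some (h, k, l)) (some (h, k, l)) = some (h, k, l))
    (hc : reesMul P (some (g, i, j)) (some (h, k, l)) =
      reesMul P (some (h, k, l)) (some (g, i, j)))
    (hne : (g, i, j) ≠ (h, k, l)) :
    P j k = none := by
  by_contra hjk
  obtain ⟨r, hr⟩ := Option.ne_none_iff_exists'.mp hjk
  rw [reesMul_some_some, reesMul_some_some, hr, Option.map_some] at hc
  obtain ⟨s, -, hs⟩ := Option.map_eq_some_iff.mp hc.symm
  -- the products lie in cells `(k, j)` and `(i, l)`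
  obtain ⟨-, rfl, rfl⟩ := Prod.ext_iff.mp hs
  have hgh : g⁻¹ = h⁻¹ := Option.some_injective _
    ((sandwich_eq_inv_of_idempotent he).symm.trans (sandwich_eq_inv_of_idempotent hf))
  exact hne (by rw [inv_inj.mp hgh])

lemma row_ne_and_col_ne_of_commute {g h : G} {i k : Fin n} {j l : Fin m}
    (he : reesMul P (some (g, i, j)) (some (g, i, j)) = some (g, i, j))
    (hf : reesMul P (some (h, k, l)) (some (h, k, l)) = some (h, k, l))
    (hc : reesMul P (some (g, i, j)) (some (h, k, l)) =
      reesMul P (some (h, k, l)) (some (g, i, j)))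
    (hne : (g, i, j) ≠ (h, k, l)) :
    i ≠ k ∧ j ≠ l := by
  have hjk := sandwich_eq_none_of_commute he hf hc hne
  have hli := sandwich_eq_none_of_commute hf he hc.symm hne.symm
  have hji := sandwich_eq_inv_of_idempotent he
  constructor
  · rintro rfl
    simp [hji] at hjk
  · rintro rfl
    simp [hji] at hli

variable {Y : Set (ReesCarrier G n m)}

lemma IsSubsemilattice.injOn_row (hY : @IsSubsemilattice _ (reesSemigroup P).toMul Y) :
    (some ⁻¹' Y).InjOn fun x : G × Fin n × Fin m => x.2.1 := by
  rintro ⟨g, i, j⟩ hx ⟨h, k, l⟩ hy (hik : i = k)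
  by_contra hne
  exact (row_ne_and_col_ne_of_commute (hY.2.1 _ hx) (hY.2.1 _ hy) (hY.2.2 _ hx _ hy) hne).1 hik

lemma IsSubsemilattice.injOn_col (hY : @IsSubsemilattice _ (reesSemigroup P).toMul Y) :
    (some ⁻¹' Y).InjOn fun x : G × Fin n × Fin m => x.2.2 := by
  rintro ⟨g, i, j⟩ hx ⟨h, k, l⟩ hy (hjl : j = l)
  by_contra hne
  exact (row_ne_and_col_ne_of_commute (hY.2.1 _ hx) (hY.2.1 _ hy) (hY.2.2 _ hx _ hy) hne).2 hjl

lemma IsSubsemilattice.ncard_preimage_some_le_rows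
    (hY : @IsSubsemilattice _ (reesSemigroup P).toMul Y) : (some ⁻¹' Y).ncard ≤ n := by
  simpa using Set.ncard_le_ncard_of_injOn _ (fun _ _ => Set.mem_univ _) hY.injOn_row

lemma IsSubsemilattice.ncard_preimage_some_le_cols
    (hY : @IsSubsemilattice _ (reesSemigroup P).toMul Y) : (some ⁻¹' Y).ncard ≤ m := by
  simpa using Set.ncard_le_ncard_of_injOn _ (fun _ _ => Set.mem_univ _) hY.injOn_col

end ReesMatrix

lemma Set.ncard_le_ncard_preimage_some_add_one {α : Type*} [Finite α] (Y : Set (Option α)) :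
    Y.ncard ≤ (some ⁻¹' Y).ncard + 1 := by
  have hsub : Y ⊆ insert none (some '' (some ⁻¹' Y)) := by
    rintro (_ | a) ha
    · exact Set.mem_insert _ _
    · exact Set.mem_insert_of_mem _ ⟨a, ha, rfl⟩
  calc Y.ncard ≤ (insert none (some '' (some ⁻¹' Y))).ncard := Set.ncard_le_ncard hsub
    _ ≤ (some '' (some ⁻¹' Y)).ncard + 1 := Set.ncard_insert_le _ _
    _ = (some ⁻¹' Y).ncard + 1 := by rw [Set.ncard_image_of_injective _ (Option.some_injective α)]

lemma Nat.cast_le_sqrt_mul_of_le_of_le {a n m c : ℕ} (hn : a ≤ n) (hm : a ≤ m) (hc : 1 ≤ c) :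
    (a : ℝ) ≤ √(c * n * m) := by
  rw [Real.le_sqrt (by positivity) (by positivity)]
  have h : a ^ 2 ≤ c * n * m :=
    calc a ^ 2 = 1 * a * a := by ring
      _ ≤ c * n * m := by gcongr
  exact_mod_cast h

theorem stmt_15_general {G : Type} [Group G] [Fintype G] {n m : ℕ}
    (P : Fin m → Fin n → Option G)
    (Y : Set (ReesCarrier G n m))
    (hY : @IsSubsemilattice (ReesCarrier G n m) (reesSemigroup P).toMul Y) :
    (Y.ncard : ℝ) ≤ Real.sqrt (Fintype.card G * n * m) + 1 := by
  have hnonzero : ((some ⁻¹' Y).ncard : ℝ) ≤ √(Fintype.card G * n * m) :=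
    Nat.cast_le_sqrt_mul_of_le_of_le hY.ncard_preimage_some_le_rows
      hY.ncard_preimage_some_le_cols Fintype.card_pos
  have hzero : Y.ncard ≤ (some ⁻¹' Y).ncard + 1 :=
    Set.ncard_le_ncard_preimage_some_add_one (α := G × Fin n × Fin m) Y
  calc (Y.ncard : ℝ) ≤ (some ⁻¹' Y).ncard + 1 := by exact_mod_cast hzero
    _ ≤ √(Fintype.card G * n * m) + 1 := by gcongr

/-- Let `S = M⁰(G; n, m; P)` be a regular Rees matrix semigroup over a group `G`
(regular: every row and every column of `P` has a nonzero entry). If `Y` is a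
subsemilattice of `S` then `|Y| ≤ √(|S| - 1) + 1`, where `|S| = |G|·n·m + 1`. -/
theorem stmt_15 {G : Type} [Group G] [Fintype G] {n m : ℕ}
    (P : Fin m → Fin n → Option G)
    (hrow : ∀ j : Fin m, ∃ k : Fin n, P j k ≠ none)
    (hcol : ∀ k : Fin n, ∃ j : Fin m, P j k ≠ none)
    (Y : Set (ReesCarrier G n m))
    (hY : @IsSubsemilattice (ReesCarrier G n m) (reesSemigroup P).toMul Y) :
    (Y.ncard : ℝ) ≤ Real.sqrt (Fintype.card G * n * m) + 1 :=
  stmt_15_general P Y hY
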